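/- arXiv:1111.4641 — 2 statements merged into one kernel-verified Lean document; each statement's English description precedes it below -/
import Mathlib

section
/- For a smooth projective surface X with ample line bundle L of class L, with c1 = c1(TX) and c2 = c2(TX), the second Chern class of the k-th principal parts sheaf of L satisfies c2(P^k_X(L)) = (1/3)·C(k+3,4)·((3L − k·c1)² + 3c2 − c1²), where intersection numbers are taken on X. -/
/- STATEMENT 1: For a smooth projective surface `X` with line bundle `𝓛` of class `L`,
`c2(P^k_X(𝓛)) = (1/3) C(k+3,4) ((3L − k c1)² + 3c2 − c1²)`.
By the splitting principle we work in a commutative ℚ-algebra (the Chow ring extended so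
that `Ω_X` has Chern roots `a, b`; so `c1 = c1(TX) = −(a+b)`, `c2 = c2(TX) = a*b`) and
`ℓ = c1(𝓛)`.  The Chern classes of the jet bundles are defined by the Whitney formula via
the exact sequences `0 → S^mΩ_X ⊗ 𝓛 → P^m_X(𝓛) → P^{m−1}_X(𝓛) → 0`, where `S^mΩ_X ⊗ 𝓛`
has Chern roots `(m−i)a + i b + ℓ`, `0 ≤ i ≤ m`. -/

variable {A : Type} [CommRing A]

/-- first Chern class of `S^mΩ_X ⊗ 𝓛` -/
def c1Sym (a b ℓ : A) (m : ℕ) : A :=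
  ∑ i ∈ Finset.range (m + 1), ((m - i) • a + i • b + ℓ)

/-- second Chern class of `S^mΩ_X ⊗ 𝓛` -/
def c2Sym (a b ℓ : A) (m : ℕ) : A :=
  ∑ i ∈ Finset.range (m + 1), ∑ j ∈ Finset.Ioo i (m + 1),
    ((m - i) • a + i • b + ℓ) * ((m - j) • a + j • b + ℓ)

/-- `(c1, c2)` of the jet bundle `P^k_X(𝓛)` on a surface, via Whitney's formula. -/
def jetChernSurface (a b ℓ : A) : ℕ → A × A
  | 0 => (ℓ, 0)
  | (k + 1) =>
      (c1Sym a b ℓ (k + 1) + (jetChernSurface a b ℓ k).1,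
       c2Sym a b ℓ (k + 1) + c1Sym a b ℓ (k + 1) * (jetChernSurface a b ℓ k).1
         + (jetChernSurface a b ℓ k).2)

/-!
Whitney's formula turns the exact sequences into the recursion defining `jetChernSurface`, so
everything reduces to closed forms for the Chern classes of `S^mΩ_X ⊗ 𝓛`. Its Chern roots form
the arithmetic progression `(m a + ℓ) + i (b - a)`, `0 ≤ i ≤ m`, so `c1` and the power sum
`∑ rᵢ²` come from `∑ i` and `∑ i²`, and `c2` from Newton's identity `2 e₂ = e₁² - p₂`. With
these, the claimed formulas for `c1` and `c2` of `P^k_X(𝓛)`, cleared of the denominators 6 and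
72, satisfy the recursion by induction on `k`. Dividing by 72 is possible because `A` is a
`ℚ`-algebra, and `24 C(k+3,4) = k(k+1)(k+2)(k+3)`.
-/

namespace Finset

theorem sq_sum_range_eq_sum_sq_add_two_mul {R : Type*} [CommSemiring R] (f : ℕ → R) (n : ℕ) :
    (∑ i ∈ range n, f i) ^ 2
      = ∑ i ∈ range n, f i ^ 2 + 2 * ∑ i ∈ range n, ∑ j ∈ Ioo i n, f i * f j := by
  induction n with
  | zero => simp
  | succ n ih =>
    have hIoo : ∑ i ∈ range (n + 1), ∑ j ∈ Ioo i (n + 1), f i * f j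
        = ∑ i ∈ range n, ∑ j ∈ Ioo i n, f i * f j + (∑ i ∈ range n, f i) * f n := by
      rw [sum_range_succ, Ioo_add_one_right_eq_Ioc, Ioc_self, sum_empty, add_zero, sum_mul,
        ← sum_add_distrib]
      refine sum_congr rfl fun i hi => ?_
      rw [← Ico_add_one_left_eq_Ioo, ← Ico_add_one_left_eq_Ioo,
        sum_Ico_succ_top (by simpa using hi)]
    rw [sum_range_succ, sum_range_succ (fun i => f i ^ 2), hIoo, add_sq, ih]
    ring

end Finset

open Finset

section ArithmeticProgression

variable {R : Type*} [CommRing R]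

theorem two_mul_sum_range_add_mul (u d : R) (n : ℕ) :
    2 * ∑ i ∈ range (n + 1), (u + i * d) = (n + 1) * (2 * u + n * d) := by
  induction n with
  | zero => simp
  | succ n ih =>
    rw [sum_range_succ]
    push_cast
    linear_combination ih

theorem six_mul_sum_range_add_mul_sq (u d : R) (n : ℕ) :
    6 * ∑ i ∈ range (n + 1), (u + i * d) ^ 2
      = (n + 1) * (6 * u ^ 2 + 6 * n * u * d + n * (2 * n + 1) * d ^ 2) := by
  induction n with
  | zero => simp
  | succ n ih =>
    rw [sum_range_succ]
    push_cast
    linear_combination ih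

end ArithmeticProgression

section ChernClasses

variable (a b ℓ : A)

theorem sum_range_symRoots {M : Type*} [AddCommMonoid M] (f : A → M) (m : ℕ) :
    ∑ i ∈ range (m + 1), f ((m - i) • a + i • b + ℓ)
      = ∑ i ∈ range (m + 1), f ((m * a + ℓ) + i * (b - a)) := by
  refine sum_congr rfl fun i hi => congrArg f ?_
  rw [nsmul_eq_mul, nsmul_eq_mul, Nat.cast_sub (by simpa [Nat.lt_succ_iff] using hi)]
  ring

theorem two_mul_c1Sym (m : ℕ) : 2 * c1Sym a b ℓ m = (m + 1) * (m * (a + b) + 2 * ℓ) := by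
  rw [c1Sym, sum_range_symRoots a b ℓ (fun x => x), two_mul_sum_range_add_mul]
  ring

theorem six_mul_sum_sq_symRoots (m : ℕ) :
    6 * ∑ i ∈ range (m + 1), ((m - i) • a + i • b + ℓ) ^ 2
      = m * (m + 1) * ((2 * m + 1) * (a + b) ^ 2 - 2 * (m + 2) * (a * b))
        + 6 * m * (m + 1) * (a + b) * ℓ + 6 * (m + 1) * ℓ ^ 2 := by
  rw [sum_range_symRoots a b ℓ (· ^ 2), six_mul_sum_range_add_mul_sq]
  ring

theorem twentyFour_mul_c2Sym (m : ℕ) :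
    24 * c2Sym a b ℓ m
      = m * (m + 1) * ((3 * m + 2) * (m - 1) * (a + b) ^ 2 + 4 * (m + 2) * (a * b)
        + 12 * m * (a + b) * ℓ + 12 * ℓ ^ 2) := by
  have hNewton :=
    sq_sum_range_eq_sum_sq_add_two_mul (fun i => (m - i) • a + i • b + ℓ) (m + 1)
  have hc1 := two_mul_c1Sym a b ℓ m
  rw [← c1Sym, ← c2Sym] at hNewton
  linear_combination (-12) * hNewton - 2 * six_mul_sum_sq_symRoots a b ℓ m
    + 3 * (2 * c1Sym a b ℓ m + (m + 1) * (m * (a + b) + 2 * ℓ)) * hc1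

theorem six_mul_jetChernSurface_fst (k : ℕ) :
    6 * (jetChernSurface a b ℓ k).1 = (k + 1) * (k + 2) * (k * (a + b) + 3 * ℓ) := by
  induction k with
  | zero => simp [jetChernSurface]; ring
  | succ k ih =>
    have hc1 := two_mul_c1Sym a b ℓ (k + 1)
    rw [jetChernSurface]
    push_cast at hc1 ⊢
    linear_combination ih + 3 * hc1

theorem seventyTwo_mul_jetChernSurface_snd (k : ℕ) :
    72 * (jetChernSurface a b ℓ k).2
      = (k : A) * (k + 1) * (k + 2) * (k + 3)
        * ((3 * ℓ + k * (a + b)) ^ 2 + 3 * (a * b) - (a + b) ^ 2) := by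
  induction k with
  | zero => simp [jetChernSurface]
  | succ k ih =>
    have hc1 := two_mul_c1Sym a b ℓ (k + 1)
    have hc2 := twentyFour_mul_c2Sym a b ℓ (k + 1)
    have hjet := six_mul_jetChernSurface_fst a b ℓ k
    rw [jetChernSurface]
    push_cast at hc1 hc2 ⊢
    linear_combination ih + 3 * hc2 + 36 * (jetChernSurface a b ℓ k).1 * hc1
      + 6 * ((k + 1 + 1) * ((k + 1) * (a + b) + 2 * ℓ)) * hjet

end ChernClasses

theorem Nat.add_three_choose_four_mul (k : ℕ) :
    (k + 3).choose 4 * 24 = k * (k + 1) * (k + 2) * (k + 3) := by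
  have h := Nat.ascFactorial_eq_factorial_mul_choose' k 4
  simp only [Nat.ascFactorial_succ, Nat.ascFactorial_zero, Nat.factorial,
    show k + 4 - 1 = k + 3 by omega] at h
  rw [mul_comm, ← h]
  ring

theorem c2_jet_surface (A : Type) [CommRing A] [Algebra ℚ A] (a b ℓ : A) (k : ℕ) :
    (jetChernSurface a b ℓ k).2 =
      algebraMap ℚ A (((k + 3).choose 4 : ℚ) / 3) *
        ((3 * ℓ - (k : A) * (-(a + b))) ^ 2 + 3 * (a * b) - (a + b) ^ 2) := by
  have h72 : IsUnit (72 : A) := by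
    rw [← map_ofNat (algebraMap ℚ A) 72]
    exact (IsUnit.mk0 (72 : ℚ) (by norm_num)).map (algebraMap ℚ A)
  have hcoeff : 72 * algebraMap ℚ A (((k + 3).choose 4 : ℚ) / 3)
      = k * (k + 1) * (k + 2) * (k + 3) := by
    have hchoose : ((k + 3).choose 4 * 24 : ℚ) = k * (k + 1) * (k + 2) * (k + 3) := by
      exact_mod_cast Nat.add_three_choose_four_mul k
    rw [← map_ofNat (algebraMap ℚ A) 72, ← map_mul,
      show (72 * ((k + 3).choose 4 / 3) : ℚ) = k * (k + 1) * (k + 2) * (k + 3) by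
        linear_combination hchoose]
    simp only [map_mul, map_add, map_natCast, map_one, map_ofNat]
  apply h72.mul_left_cancel
  rw [seventyTwo_mul_jetChernSurface_snd, ← mul_assoc 72, hcoeff]
  ring
end

section
/- For a smooth projective threefold X with line bundle L, the top Chern class of the second jet bundle satisfies c3(P²_X(L)) = 120L³ − 180c1·L² + 48c2·L + 72c1²·L − 7c1³ − 20c1c2 − 8c3. -/
/- STATEMENT 3: For a smooth projective threefold `X` with line bundle `𝓛`,
`c3(P²_X(𝓛)) = 120L³ − 180c1L² + 48c2L + 72c1²L − 7c1³ − 20c1c2 − 8c3`.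
By the splitting principle, work in a commutative ring where `Ω_X` has Chern roots
`a, b, c` (so `c1 = c1(TX) = −(a+b+c)`, `c2 = ab+ac+bc`, `c3 = −abc`) and `ℓ = c1(𝓛)`.
By Whitney's formula applied to the jet exact sequences
`0 → S²Ω_X ⊗ 𝓛 → P²_X(𝓛) → P¹_X(𝓛) → 0` and `0 → Ω_X ⊗ 𝓛 → P¹_X(𝓛) → 𝓛 → 0`,
the bundle `P²_X(𝓛)` has the ten Chern roots listed below, and `c3(P²_X(𝓛))` is their
third elementary symmetric function. -/
set_option maxHeartbeats 4000000 in
theorem c3_jet2_threefold (A : Type) [CommRing A] (a b c ℓ : A) :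
    (let roots : Fin 10 → A :=
      ![2 * a + ℓ, 2 * b + ℓ, 2 * c + ℓ, a + b + ℓ, a + c + ℓ, b + c + ℓ,
        ℓ, a + ℓ, b + ℓ, c + ℓ]
     ∑ i : Fin 10, ∑ j : Fin 10, ∑ l : Fin 10,
        if i < j ∧ j < l then roots i * roots j * roots l else 0) =
      120 * ℓ ^ 3 - 180 * (-(a + b + c)) * ℓ ^ 2 + 48 * (a * b + a * c + b * c) * ℓ
        + 72 * (-(a + b + c)) ^ 2 * ℓ - 7 * (-(a + b + c)) ^ 3
        - 20 * (-(a + b + c)) * (a * b + a * c + b * c) - 8 * (-(a * b * c)) := by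
  simp only [Fin.sum_univ_succ, Fin.sum_univ_zero, Matrix.cons_val_zero, Matrix.cons_val_succ, Fin.lt_def, Fin.val_succ, Fin.val_zero]
  norm_num
  ring
end
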